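/- Let 0 < Γ ≤ Γ′, let W₁, W₂, W₄ > 0 with W₁ ≠ W₂, and let θ ∈ (0,1). Let γ_SR, γ_SD, γ_RD, T be independent random variables where γ_SR, γ_SD, γ_RD are exponential with rates W₄, W₂, W₁ respectively and T is Bernoulli with P(T = 1) = θ. Then P({γ_SD < Γ′} ∩ {min(γ_SR, T·γ_RD + γ_SD) < Γ}) = (1 − e^{−W₄ Γ})(1 − e^{−W₂ Γ′}) + e^{−W₄ Γ}·[ θ·( (1 − e^{−W₂ Γ}) + W₂(e^{−W₁ Γ} − e^{−W₂ Γ})/(W₁ − W₂) ) + (1 − θ)·(1 − e^{−W₂ Γ}) ]. -/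

import Mathlib

/-!
If `γ_SR < Γ`, the outage event reduces to `γ_SD < Γ'`, and independence of `γ_SR` from
`(T, γ_SD, γ_RD)` makes its probability a product. If `γ_SR ≥ Γ`, condition on the two-point
variable `T`: with the relay silent the event is `γ_SD < Γ` (which forces `γ_SD < Γ'`), with the
relay active it is `γ_SD + γ_RD < Γ` up to the null set `{γ_RD < 0}`. The latter has probability
`∫₀^Γ W₂ e^{-W₂x} (1 - e^{-W₁(Γ - x)}) dx`, which gives the term with `W₁ - W₂` in the
denominator.
-/

open Real MeasureTheory ProbabilityTheory Set

lemma expMeasure_eq_withDensity (r : ℝ) :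
    expMeasure r = volume.withDensity (exponentialPDF r) := rfl

lemma ae_nonneg_expMeasure (r : ℝ) : ∀ᵐ x ∂expMeasure r, 0 ≤ x := by
  have hneg : expMeasure r (Iio 0) = 0 := by
    rw [expMeasure_eq_withDensity, withDensity_apply _ measurableSet_Iio]
    exact lintegral_exponentialPDF_of_nonpos le_rfl
  exact measure_mono_null (fun x (hx : ¬0 ≤ x) ↦ (not_le.mp hx : x ∈ Iio 0)) hneg

lemma expMeasure_real_Iio {r : ℝ} (hr : 0 < r) (x : ℝ) :
    (expMeasure r).real (Iio x) = if 0 ≤ x then 1 - exp (-(r * x)) else 0 := by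
  rw [measureReal_def, expMeasure_eq_withDensity, withDensity_apply _ measurableSet_Iio,
    setLIntegral_congr Iio_ae_eq_Iic, ← cdf_expMeasure_eq_lintegral hr, cdf_expMeasure_eq hr]

lemma measureReal_preimage_Iio_of_map_eq_expMeasure {Ω : Type*} [MeasurableSpace Ω]
    {P : Measure Ω} {Y : Ω → ℝ} {r x : ℝ} (hY : Measurable Y)
    (hlaw : P.map Y = expMeasure r) (hr : 0 < r) (hx : 0 ≤ x) :
    P.real (Y ⁻¹' Iio x) = 1 - exp (-(r * x)) := by
  rw [← map_measureReal_apply hY measurableSet_Iio, hlaw, expMeasure_real_Iio hr, if_pos hx]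

lemma integral_expMeasure {r : ℝ} (hr : 0 < r) (g : ℝ → ℝ) :
    ∫ x, g x ∂expMeasure r = ∫ x in Ici 0, r * exp (-(r * x)) * g x := by
  rw [expMeasure_eq_withDensity,
    integral_withDensity_eq_integral_toReal_smul (f := exponentialPDF r)
      (measurable_exponentialPDFReal r).ennreal_ofReal
      (ae_of_all _ fun _ ↦ ENNReal.ofReal_lt_top),
    ← integral_indicator measurableSet_Ici]
  congr 1 with x
  by_cases hx : 0 ≤ x <;> simp [exponentialPDF_eq, hx, hr.le, (exp_pos _).le, mul_assoc]

lemma integral_mul_exp_mul_one_sub_exp {a b c : ℝ} (hab : a ≠ b) :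
    ∫ x in 0..c, a * exp (-(a * x)) * (1 - exp (-(b * (c - x))))
      = 1 - exp (-(a * c)) + a * (exp (-(b * c)) - exp (-(a * c))) / (b - a) := by
  have hba : b - a ≠ 0 := sub_ne_zero.mpr hab.symm
  have hderiv : ∀ x, HasDerivAt
      (fun x ↦ -exp (-(a * x)) - a / (b - a) * exp (-(b * (c - x)) - a * x))
      (a * exp (-(a * x)) * (1 - exp (-(b * (c - x))))) x := by
    intro x
    have h1 := ((hasDerivAt_id x).const_mul a).neg.exp.neg
    have h2 := ((((hasDerivAt_id x).const_sub c).const_mul b).neg.sub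
      ((hasDerivAt_id x).const_mul a)).exp.const_mul (a / (b - a))
    refine (h1.sub h2).congr_deriv ?_
    simp only [id, Pi.neg_apply, Pi.sub_apply, sub_eq_add_neg (-(b * (c - x))), exp_add]
    field_simp
  rw [intervalIntegral.integral_eq_sub_of_hasDerivAt (fun x _ ↦ hderiv x)
    (by apply Continuous.intervalIntegrable; fun_prop)]
  simp only [sub_self, mul_zero, neg_zero, zero_sub, exp_zero, sub_zero]
  field_simp
  ring

lemma expMeasure_prod_real_add_lt {a b c : ℝ} (ha : 0 < a) (hb : 0 < b) (hab : a ≠ b)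
    (hc : 0 ≤ c) :
    ((expMeasure a).prod (expMeasure b)).real {p | p.1 + p.2 < c}
      = 1 - exp (-(a * c)) + a * (exp (-(b * c)) - exp (-(a * c))) / (b - a) := by
  have := isProbabilityMeasure_expMeasure hb
  have hs : MeasurableSet {p : ℝ × ℝ | p.1 + p.2 < c} :=
    measurableSet_lt (by fun_prop) measurable_const
  have hslice (x : ℝ) : Prod.mk x ⁻¹' {p : ℝ × ℝ | p.1 + p.2 < c} = Iio (c - x) := by
    ext y; simp [lt_sub_iff_add_lt']
  calc ((expMeasure a).prod (expMeasure b)).real {p | p.1 + p.2 < c}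
      = ∫ x, (expMeasure b).real (Iio (c - x)) ∂expMeasure a := by
        rw [measureReal_def, Measure.prod_apply hs,
          ← integral_toReal (measurable_measure_prodMk_left hs).aemeasurable
            (ae_of_all _ fun _ ↦ measure_lt_top _ _)]
        simp_rw [hslice, measureReal_def]
    _ = ∫ x in Icc 0 c, a * exp (-(a * x)) * (1 - exp (-(b * (c - x)))) := by
        rw [integral_expMeasure ha, setIntegral_eq_of_subset_of_forall_sdiff_eq_zero
          measurableSet_Ici Icc_subset_Ici_self]
        · refine setIntegral_congr_fun measurableSet_Icc fun x hx ↦ ?_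
          simp [expMeasure_real_Iio hb, hx.2]
        · rintro x ⟨hx0, hxc⟩
          simp_all [expMeasure_real_Iio hb]
    _ = ∫ x in 0..c, a * exp (-(a * x)) * (1 - exp (-(b * (c - x)))) := by
        rw [integral_Icc_eq_integral_Ioc, intervalIntegral.integral_of_le hc]
    _ = _ := integral_mul_exp_mul_one_sub_exp hab

namespace ProbabilityTheory

lemma iIndepFun.indepFun_prodMk_triple {ι Ω β : Type*} [MeasurableSpace Ω]
    [MeasurableSpace β] {μ : Measure Ω} {f : ι → Ω → β} (h : iIndepFun f μ)
    (hf : ∀ i, Measurable (f i)) {i j k l : ι} (hij : i ≠ j) (hik : i ≠ k) (hil : i ≠ l) :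
    IndepFun (f i) (fun ω ↦ (f j ω, (f k ω, f l ω))) μ := by
  classical
  have hblocks := h.indepFun_finset {i} {j, k, l} (by simp [hij, hik, hil]) hf
  exact hblocks.comp (φ := fun g : ({i} : Finset ι) → β ↦ g ⟨i, by simp⟩)
    (ψ := fun g : ({j, k, l} : Finset ι) → β ↦
      (g ⟨j, by simp⟩, (g ⟨k, by simp⟩, g ⟨l, by simp⟩)))
    (by fun_prop) (by fun_prop)

section Conditioning

variable {Ω α β : Type*} [MeasurableSpace Ω] [MeasurableSpace α] [MeasurableSpace β]
  {P : Measure Ω}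

lemma IndepFun.measureReal_inter_preimage_eq_mul {X : Ω → α} {V : Ω → β}
    (hXV : IndepFun X V P) {S : Set α} {A : Set β} (hS : MeasurableSet S) (hA : MeasurableSet A) :
    P.real (X ⁻¹' S ∩ V ⁻¹' A) = P.real (X ⁻¹' S) * P.real (V ⁻¹' A) := by
  simp only [measureReal_def, hXV.measure_inter_preimage_eq_mul _ _ hS hA, ENNReal.toReal_mul]

lemma IndepFun.measureReal_inter_union [IsFiniteMeasure P] {X : Ω → α} {V : Ω → β}
    (hXV : IndepFun X V P) (hX : Measurable X) (hV : Measurable V) {S : Set α} {A B : Set β}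
    (hS : MeasurableSet S) (hA : MeasurableSet A) (hB : MeasurableSet B) :
    P.real (V ⁻¹' A ∩ (X ⁻¹' S ∪ V ⁻¹' B))
      = P.real (X ⁻¹' S) * P.real (V ⁻¹' A)
        + P.real (X ⁻¹' Sᶜ) * P.real (V ⁻¹' (A ∩ B)) := by
  have hsplit : V ⁻¹' A ∩ (X ⁻¹' S ∪ V ⁻¹' B)
      = (X ⁻¹' S ∩ V ⁻¹' A) ∪ (X ⁻¹' Sᶜ ∩ V ⁻¹' (A ∩ B)) := by
    ext ω; by_cases hω : X ω ∈ S <;> simp [hω]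
  have hdisj : Disjoint (X ⁻¹' S ∩ V ⁻¹' A) (X ⁻¹' Sᶜ ∩ V ⁻¹' (A ∩ B)) :=
    (disjoint_compl_right.preimage X).mono inter_subset_left inter_subset_left
  rw [hsplit, measureReal_union hdisj ((hX hS.compl).inter (hV (hA.inter hB))),
    hXV.measureReal_inter_preimage_eq_mul hS hA,
    hXV.measureReal_inter_preimage_eq_mul hS.compl (hA.inter hB)]

lemma IndepFun.measureReal_preimage_prodMk_of_map_eq_add_dirac [IsFiniteMeasure P]
    {T : Ω → α} {U : Ω → β} (hTU : IndepFun T U P) (hT : Measurable T) (hU : Measurable U)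
    {t₀ t₁ : α} {c₀ c₁ : ℝ} (hc₀ : 0 ≤ c₀) (hc₁ : 0 ≤ c₁)
    (hlaw : P.map T
      = ENNReal.ofReal c₀ • Measure.dirac t₀ + ENNReal.ofReal c₁ • Measure.dirac t₁)
    {S : Set (α × β)} (hS : MeasurableSet S) :
    P.real ((fun ω ↦ (T ω, U ω)) ⁻¹' S)
      = c₀ * P.real (U ⁻¹' (Prod.mk t₀ ⁻¹' S))
        + c₁ * P.real (U ⁻¹' (Prod.mk t₁ ⁻¹' S)) := by
  rw [← map_measureReal_apply (hT.prodMk hU) hS,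
    hTU.map_prod_eq_prod_map_map hT.aemeasurable hU.aemeasurable, hlaw, Measure.add_prod,
    Measure.prod_smul_left, Measure.prod_smul_left, Measure.dirac_prod, Measure.dirac_prod]
  simp only [measureReal_def, Measure.add_apply, Measure.smul_apply, smul_eq_mul,
    Measure.map_apply measurable_prodMk_left hS,
    Measure.map_apply hU (measurable_prodMk_left hS)]
  rw [ENNReal.toReal_add (by finiteness) (by finiteness), ENNReal.toReal_mul,
    ENNReal.toReal_mul, ENNReal.toReal_ofReal hc₀, ENNReal.toReal_ofReal hc₁]

lemma IndepFun.measureReal_lt_and_mul_add_lt [IsFiniteMeasure P] {T Y Z : Ω → ℝ}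
    (hTYZ : IndepFun T (fun ω ↦ (Y ω, Z ω)) P) (hT : Measurable T) (hY : Measurable Y)
    (hZ : Measurable Z) (hZ_nonneg : ∀ᵐ ω ∂P, 0 ≤ Z ω) {θ Γ Γ' : ℝ} (hθ0 : 0 ≤ θ)
    (hθ1 : θ ≤ 1) (hΓΓ' : Γ ≤ Γ')
    (hlaw : P.map T
      = ENNReal.ofReal (1 - θ) • Measure.dirac 0 + ENNReal.ofReal θ • Measure.dirac 1) :
    P.real {ω | Y ω < Γ' ∧ T ω * Z ω + Y ω < Γ}
      = (1 - θ) * P.real (Y ⁻¹' Iio Γ) + θ * P.real {ω | Y ω + Z ω < Γ} := by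
  set S := {v : ℝ × ℝ × ℝ | v.2.1 < Γ'} ∩ {v | v.1 * v.2.2 + v.2.1 < Γ}
  have hS : MeasurableSet S :=
    (measurableSet_lt (by fun_prop) (by fun_prop)).inter
      (measurableSet_lt (by fun_prop) (by fun_prop))
  have hsilent : (fun ω ↦ (Y ω, Z ω)) ⁻¹' (Prod.mk 0 ⁻¹' S) = Y ⁻¹' Iio Γ := by
    ext ω
    simp only [S, mem_preimage, mem_inter_iff, mem_ofPred_eq, zero_mul, zero_add, mem_Iio]
    exact ⟨And.right, fun h ↦ ⟨h.trans_le hΓΓ', h⟩⟩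
  have hactive : P.real ((fun ω ↦ (Y ω, Z ω)) ⁻¹' (Prod.mk 1 ⁻¹' S))
      = P.real {ω | Y ω + Z ω < Γ} := by
    refine measureReal_congr (Filter.eventuallyEq_set.mpr ?_)
    filter_upwards [hZ_nonneg] with ω hω
    simp only [S, mem_preimage, mem_inter_iff, mem_ofPred_eq, one_mul]
    constructor
    · rintro ⟨-, h⟩; linarith
    · intro h; constructor <;> linarith
  rw [show {ω | Y ω < Γ' ∧ T ω * Z ω + Y ω < Γ} = (fun ω ↦ (T ω, (Y ω, Z ω))) ⁻¹' S
      from rfl,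
    hTYZ.measureReal_preimage_prodMk_of_map_eq_add_dirac hT (hY.prodMk hZ) (sub_nonneg.2 hθ1)
      hθ0 hlaw hS, hsilent, hactive]

lemma IndepFun.measureReal_add_lt_of_map_eq_expMeasure [IsFiniteMeasure P] {X Y : Ω → ℝ}
    (hXY : IndepFun X Y P) (hX : Measurable X) (hY : Measurable Y) {a b c : ℝ}
    (hlawX : P.map X = expMeasure a) (hlawY : P.map Y = expMeasure b) (ha : 0 < a) (hb : 0 < b)
    (hab : a ≠ b) (hc : 0 ≤ c) :
    P.real {ω | X ω + Y ω < c}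
      = 1 - exp (-(a * c)) + a * (exp (-(b * c)) - exp (-(a * c))) / (b - a) := by
  rw [show {ω | X ω + Y ω < c} = (fun ω ↦ (X ω, Y ω)) ⁻¹' {p | p.1 + p.2 < c} from rfl,
    ← map_measureReal_apply (hX.prodMk hY) (measurableSet_lt (by fun_prop) (by fun_prop)),
    hXY.map_prod_eq_prod_map_map hX.aemeasurable hY.aemeasurable, hlawX, hlawY,
    expMeasure_prod_real_add_lt ha hb hab hc]

end Conditioning

end ProbabilityTheory

/-- Outage probability of the HSU architecture with the incremental on-off policy
in the stable-buffer case (Eq. (23)): the relay transmits (`T = 1`, probability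
`θ = 1/φ`) with relayed SNR `γ_RD`, and is silent (`T = 0`) otherwise. -/
theorem stmt15 {Ω : Type*} [MeasurableSpace Ω] (P : Measure Ω) [IsProbabilityMeasure P]
    (Γ Γ' W1 W2 W4 θ : ℝ)
    (hΓ : 0 < Γ) (hΓΓ' : Γ ≤ Γ')
    (hW1 : 0 < W1) (hW2 : 0 < W2) (hW4 : 0 < W4) (hne : W1 ≠ W2)
    (hθ0 : 0 < θ) (hθ1 : θ < 1)
    (γSR γSD γRD T : Ω → ℝ)
    (hmSR : Measurable γSR) (hmSD : Measurable γSD)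
    (hmRD : Measurable γRD) (hmT : Measurable T)
    (hindep : iIndepFun
      ![γSR, γSD, γRD, T] P)
    (hdSR : Measure.map γSR P = expMeasure W4)
    (hdSD : Measure.map γSD P = expMeasure W2)
    (hdRD : Measure.map γRD P = expMeasure W1)
    (hdT : Measure.map T P
      = ENNReal.ofReal (1 - θ) • Measure.dirac (0 : ℝ)
        + ENNReal.ofReal θ • Measure.dirac (1 : ℝ)) :
    (P ({ω | γSD ω < Γ'} ∩ {ω | min (γSR ω) (T ω * γRD ω + γSD ω) < Γ})).toReal
      = (1 - Real.exp (-W4 * Γ)) * (1 - Real.exp (-W2 * Γ'))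
        + Real.exp (-W4 * Γ) *
          (θ * ((1 - Real.exp (-W2 * Γ))
              + W2 * (Real.exp (-W1 * Γ) - Real.exp (-W2 * Γ)) / (W1 - W2))
            + (1 - θ) * (1 - Real.exp (-W2 * Γ))) := by
  have hm : ∀ i, Measurable (![γSR, γSD, γRD, T] i) := fun i ↦ by
    fin_cases i <;> assumption
  set V := fun ω ↦ (T ω, (γSD ω, γRD ω))
  have hSR_indep : IndepFun γSR V P :=
    hindep.indepFun_prodMk_triple hm (i := 0) (j := 3) (k := 1) (l := 2)
      (by decide) (by decide) (by decide)
  have hA : MeasurableSet {v : ℝ × ℝ × ℝ | v.2.1 < Γ'} :=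
    measurableSet_lt (by fun_prop) (by fun_prop)
  have hB : MeasurableSet {v : ℝ × ℝ × ℝ | v.1 * v.2.2 + v.2.1 < Γ} :=
    measurableSet_lt (by fun_prop) (by fun_prop)
  have hevent : {ω | γSD ω < Γ'} ∩ {ω | min (γSR ω) (T ω * γRD ω + γSD ω) < Γ}
      = V ⁻¹' {v | v.2.1 < Γ'}
        ∩ (γSR ⁻¹' Iio Γ ∪ V ⁻¹' {v | v.1 * v.2.2 + v.2.1 < Γ}) := by
    ext ω; simp [V]
  have hdirect : P.real (V ⁻¹' {v | v.2.1 < Γ'}) = 1 - exp (-(W2 * Γ')) :=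
    measureReal_preimage_Iio_of_map_eq_expMeasure hmSD hdSD hW2 (hΓ.le.trans hΓΓ')
  have hrelay : P.real (V ⁻¹' ({v | v.2.1 < Γ'} ∩ {v | v.1 * v.2.2 + v.2.1 < Γ}))
      = (1 - θ) * P.real (γSD ⁻¹' Iio Γ) + θ * P.real {ω | γSD ω + γRD ω < Γ} :=
    (hindep.indepFun_prodMk hm 1 2 3 (by decide) (by decide)).symm
      |>.measureReal_lt_and_mul_add_lt hmT hmSD hmRD
        (ae_of_ae_map hmRD.aemeasurable (hdRD ▸ ae_nonneg_expMeasure W1))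
        hθ0.le hθ1.le hΓΓ' hdT
  have hsum : P.real {ω | γSD ω + γRD ω < Γ}
      = 1 - exp (-(W2 * Γ)) + W2 * (exp (-(W1 * Γ)) - exp (-(W2 * Γ))) / (W1 - W2) :=
    (hindep.indepFun (show (1 : Fin 4) ≠ 2 by decide)).measureReal_add_lt_of_map_eq_expMeasure
      hmSD hmRD hdSD hdRD hW2 hW1 hne.symm hΓ.le
  rw [← measureReal_def, hevent, hSR_indep.measureReal_inter_union hmSR (by fun_prop)
      measurableSet_Iio hA hB, hdirect, hrelay, hsum, preimage_compl,
    probReal_compl_eq_one_sub (hmSR measurableSet_Iio),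
    measureReal_preimage_Iio_of_map_eq_expMeasure hmSR hdSR hW4 hΓ.le,
    measureReal_preimage_Iio_of_map_eq_expMeasure hmSD hdSD hW2 hΓ.le]
  simp only [neg_mul]
  ring
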